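/- Let n ≥ 2 and p > 1. If Φ : P^n → C_p(R^n) is SL(n)-covariant, then Φ(P)(x) = Φ(P)(π_P x) for all P ∈ P^n and all x ∈ R^n, where π_P denotes the orthogonal projection of R^n onto the linear hull of P. -/

import Mathlib

open MeasureTheory Metric
open scoped RealInnerProductSpace Pointwise

noncomputable section

/-- Euclidean `n`-space. -/
abbrev Eucl (n : ℕ) : Type := EuclideanSpace ℝ (Fin n)

/-- A convex body: a nonempty compact convex subset of `ℝⁿ`. -/
def IsConvexBody {n : ℕ} (K : Set (Eucl n)) : Prop :=
  K.Nonempty ∧ IsCompact K ∧ Convex ℝ K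

/-- A convex body containing the origin. -/
def IsConvexBodyO {n : ℕ} (K : Set (Eucl n)) : Prop :=
  IsConvexBody K ∧ (0 : Eucl n) ∈ K

/-- A convex polytope: the convex hull of a finite nonempty set of points. -/
def IsPolytope {n : ℕ} (P : Set (Eucl n)) : Prop :=
  ∃ S : Finset (Eucl n), S.Nonempty ∧ P = convexHull ℝ (S : Set (Eucl n))

/-- A convex polytope containing the origin. -/
def IsPolytopeO {n : ℕ} (P : Set (Eucl n)) : Prop :=
  IsPolytope P ∧ (0 : Eucl n) ∈ P

/-- The support function `h(K, u) = sup_{x ∈ K} ⟨x, u⟩`. -/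
def suppFn {n : ℕ} (K : Set (Eucl n)) (u : Eucl n) : ℝ :=
  sSup ((fun x => ⟪x, u⟫) '' K)

/-- The dimension of a convex set: the dimension of its affine hull. -/
def setDim {n : ℕ} (P : Set (Eucl n)) : ℕ :=
  Module.finrank ℝ (affineSpan ℝ P).direction

/-- `h(I_p⁺ K, u)^p = max_{x ∈ K} ⟨x, u⟩₊^p`. -/
def IppF {n : ℕ} (p : ℝ) (K : Set (Eucl n)) (u : Eucl n) : ℝ :=
  sSup ((fun x => (max ⟪x, u⟫ 0) ^ p) '' K)

/-- `h(I_p⁻ K, u)^p = max_{x ∈ K} ⟨x, u⟩₋^p`. -/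
def ImpF {n : ℕ} (p : ℝ) (K : Set (Eucl n)) (u : Eucl n) : ℝ :=
  sSup ((fun x => (max (-⟪x, u⟫) 0) ^ p) '' K)

/-- `(J_p⁺ K)(u) = min_{x ∈ K} ⟨x, u⟩₊^p`. -/
def JppF {n : ℕ} (p : ℝ) (K : Set (Eucl n)) (u : Eucl n) : ℝ :=
  sInf ((fun x => (max ⟪x, u⟫ 0) ^ p) '' K)

/-- `(J_p⁻ K)(u) = min_{x ∈ K} ⟨x, u⟩₋^p`. -/
def JmpF {n : ℕ} (p : ℝ) (K : Set (Eucl n)) (u : Eucl n) : ℝ :=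
  sInf ((fun x => (max (-⟪x, u⟫) 0) ^ p) '' K)

/-- The face `F(K, v) = {x ∈ K : ⟨x, v⟩ = h(K, v)}`. -/
def face {n : ℕ} (K : Set (Eucl n)) (v : Eucl n) : Set (Eucl n) :=
  {x ∈ K | ⟪x, v⟫ = suppFn K v}

/-- `h(E_p⁺ K, u)^p = (1/2) Σ_{v ∈ S¹, h(K,v) = 0} max_{x ∈ F(K,v)} ⟨x, u⟩₊^p`. -/
def EppF {n : ℕ} (p : ℝ) (K : Set (Eucl n)) (u : Eucl n) : ℝ :=
  (1 / 2) * ∑' v : {v : Eucl n // ‖v‖ = 1 ∧ suppFn K v = 0},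
    sSup ((fun x => (max ⟪x, u⟫ 0) ^ p) '' face K v.1)

/-- `h(E_p⁻ K, u)^p = (1/2) Σ_{v ∈ S¹, h(K,v) = 0} max_{x ∈ F(K,v)} ⟨x, u⟩₋^p`. -/
def EmpF {n : ℕ} (p : ℝ) (K : Set (Eucl n)) (u : Eucl n) : ℝ :=
  (1 / 2) * ∑' v : {v : Eucl n // ‖v‖ = 1 ∧ suppFn K v = 0},
    sSup ((fun x => (max (-⟪x, u⟫) 0) ^ p) '' face K v.1)

/-- `(F_p⁺ K)(u) = (1/2) Σ_{v ∈ S¹, h(K,v) = 0} min_{x ∈ F(K,v)} ⟨x, u⟩₊^p`. -/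
def FppF {n : ℕ} (p : ℝ) (K : Set (Eucl n)) (u : Eucl n) : ℝ :=
  (1 / 2) * ∑' v : {v : Eucl n // ‖v‖ = 1 ∧ suppFn K v = 0},
    sInf ((fun x => (max ⟪x, u⟫ 0) ^ p) '' face K v.1)

/-- `(F_p⁻ K)(u) = (1/2) Σ_{v ∈ S¹, h(K,v) = 0} min_{x ∈ F(K,v)} ⟨x, u⟩₋^p`. -/
def FmpF {n : ℕ} (p : ℝ) (K : Set (Eucl n)) (u : Eucl n) : ℝ :=
  (1 / 2) * ∑' v : {v : Eucl n // ‖v‖ = 1 ∧ suppFn K v = 0},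
    sInf ((fun x => (max (-⟪x, u⟫) 0) ^ p) '' face K v.1)

/-- The maximum norm over the unit sphere. -/
def sphSup {n : ℕ} (f : Eucl n → ℝ) : ℝ :=
  ⨆ u : Metric.sphere (0 : Eucl n) 1, |f u.1|

/-- The standard simplex `Tⁿ = conv{o, e₁, …, e_n}`. -/
def stdT (n : ℕ) : Set (Eucl n) :=
  convexHull ℝ (insert (0 : Eucl n) (Set.range fun i : Fin n => EuclideanSpace.single i (1 : ℝ)))

/-- The simplex `T̃ⁿ⁻¹ = conv{e₁, …, e_n}`. -/
def tilT (n : ℕ) : Set (Eucl n) :=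
  convexHull ℝ (Set.range fun i : Fin n => EuclideanSpace.single i (1 : ℝ))

/-!
Let `V` be the linear hull of `P`. For `a ⊥ V` and `b ⊥ a`, the transvection `x ↦ x + ⟪a, x⟫ b`
fixes `P` pointwise and has determinant one, so covariance makes `Φ P` invariant under its adjoint
`z ↦ z + ⟪b, z⟫ a`. Taking `b = z / ‖z‖²` shows `Φ P (z + a) = Φ P z` whenever `z ≠ 0` and `a ⊥ z`.
With `z = π_P x` this is the claim when `π_P x ≠ 0`. When `x ⊥ V`, choose `v ≠ 0` with `v ⊥ x`
(here `n ≥ 2` is needed): then `Φ P (ε v + x) = Φ P (ε v) = ε ^ p Φ P v`, and letting `ε → 0⁺`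
continuity gives `Φ P x = 0 = Φ P 0`.
-/

open Filter Topology

section InnerProductSpace

variable {E : Type*} [NormedAddCommGroup E] [InnerProductSpace ℝ E] [FiniteDimensional ℝ E]

theorem adjoint_transvection_innerSL (a b : E) :
    LinearMap.adjoint (LinearMap.transvection (innerSL ℝ a).toLinearMap b) =
      LinearMap.transvection (innerSL ℝ b).toLinearMap a := by
  refine LinearMap.ext fun z => ext_inner_left ℝ fun x => ?_
  simp only [LinearMap.adjoint_inner_right, LinearMap.transvection.apply,
    ContinuousLinearMap.coe_coe, innerSL_apply_apply, inner_add_left, inner_add_right,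
    real_inner_smul_left, real_inner_smul_right, real_inner_comm a x]
  ring

theorem exists_ne_zero_inner_eq_zero (hE : 2 ≤ Module.finrank ℝ E) (x : E) :
    ∃ v : E, v ≠ 0 ∧ ⟪x, v⟫ = 0 := by
  have hsum := (ℝ ∙ x).finrank_add_finrank_orthogonal
  have hx : Module.finrank ℝ (ℝ ∙ x) ≤ 1 := by
    simpa using finrank_span_le_card (R := ℝ) ({x} : Set E)
  obtain ⟨v, hv, hv0⟩ := Submodule.exists_mem_ne_zero_of_ne_bot
    (Submodule.one_le_finrank_iff.mp (by omega) : (ℝ ∙ x)ᗮ ≠ ⊥)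
  exact ⟨v, hv0, Submodule.mem_orthogonal_singleton_iff_inner_right.mp hv⟩

theorem map_add_eq_of_mem_orthogonal_span {Φ : Set E → E → ℝ} {P : Set E}
    (hcov : ∀ φ : E →ₗ[ℝ] E, LinearMap.det φ = 1 → Φ (φ '' P) = Φ P ∘ LinearMap.adjoint φ)
    {a z : E} (ha : a ∈ (Submodule.span ℝ P)ᗮ) (hz : z ≠ 0) (haz : ⟪a, z⟫ = 0) :
    Φ P (z + a) = Φ P z := by
  set b : E := (‖z‖ ^ 2)⁻¹ • z
  set τ := LinearMap.transvection (innerSL ℝ a).toLinearMap b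
  have hfix : τ '' P = P := by
    refine (Set.image_congr fun u hu => ?_).trans (Set.image_id P)
    rw [LinearMap.transvection.apply, ContinuousLinearMap.coe_coe, innerSL_apply_apply,
      Submodule.inner_left_of_mem_orthogonal (Submodule.subset_span hu) ha, zero_smul, add_zero,
      id]
  have hdet : LinearMap.det τ = 1 := by
    rw [LinearMap.transvection.det, ContinuousLinearMap.coe_coe, innerSL_apply_apply,
      real_inner_smul_right, haz, mul_zero, add_zero]
  have hzb : ⟪b, z⟫ = 1 := by
    rw [real_inner_smul_left, real_inner_self_eq_norm_sq]
    exact inv_mul_cancel₀ (by positivity)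
  have h := congrFun (hcov τ hdet) z
  rw [hfix, Function.comp_apply, adjoint_transvection_innerSL, LinearMap.transvection.apply,
    ContinuousLinearMap.coe_coe, innerSL_apply_apply, hzb, one_smul] at h
  exact h.symm

end InnerProductSpace

theorem eq_zero_of_forall_pos_map_smul_add_eq {E : Type*} [AddCommGroup E] [Module ℝ E]
    [TopologicalSpace E] [ContinuousAdd E] [ContinuousSMul ℝ E] {f : E → ℝ} {p : ℝ} (hp : 0 < p)
    (hf : Continuous f) (hhom : ∀ s : ℝ, 0 < s → ∀ u : E, f (s • u) = s ^ p * f u) {x v : E}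
    (h : ∀ ε : ℝ, 0 < ε → f (ε • v + x) = f (ε • v)) : f x = 0 := by
  have hlim : Tendsto (fun ε : ℝ => f (ε • v + x)) (𝓝[>] 0) (𝓝 (f x)) := by
    have hc : Continuous fun ε : ℝ => f (ε • v + x) := by fun_prop
    simpa using hc.continuousWithinAt.tendsto (x := 0) (s := Set.Ioi 0)
  have h0 : Tendsto (fun ε : ℝ => ε ^ p * f v) (𝓝[>] 0) (𝓝 0) := by
    have hcont := (Real.continuousAt_rpow_const 0 p (Or.inr hp.le)).tendsto
    rw [Real.zero_rpow hp.ne'] at hcont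
    simpa using (hcont.mono_left nhdsWithin_le_nhds).mul_const (f v)
  refine tendsto_nhds_unique (hlim.congr' ?_) h0
  filter_upwards [self_mem_nhdsWithin] with ε hε
  rw [h ε hε, hhom ε hε v]

/-- For `n ≥ 2`, an `SL(n)`-covariant map `Φ : 𝒫ⁿ → C_p(ℝⁿ)` satisfies
`Φ(P)(x) = Φ(P)(π_P x)`, where `π_P` is the orthogonal projection onto the linear hull of
`P`. -/
theorem statement_16 (n : ℕ) (hn : 2 ≤ n) (p : ℝ) (hp : 1 < p)
    (Φ : Set (Eucl n) → Eucl n → ℝ)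
    (hCp : ∀ P : Set (Eucl n), IsPolytope P → Continuous (Φ P) ∧
      ∀ s : ℝ, 0 < s → ∀ u : Eucl n, Φ P (s • u) = s ^ p * Φ P u)
    (hcov : ∀ P : Set (Eucl n), IsPolytope P →
      ∀ φ : Eucl n →ₗ[ℝ] Eucl n, LinearMap.det φ = 1 →
        Φ (φ '' P) = Φ P ∘ LinearMap.adjoint φ) :
    ∀ P : Set (Eucl n), IsPolytope P → ∀ x : Eucl n,
      Φ P x = Φ P (Submodule.orthogonalProjectionOnto (Submodule.span ℝ P) x : Eucl n) := by
  intro P hP x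
  set V := Submodule.span ℝ P
  set y : Eucl n := (V.orthogonalProjectionOnto x : Eucl n)
  have hxy : x - y ∈ Vᗮ := V.sub_starProjection_mem_orthogonal x
  by_cases hy : y = 0
  · rw [hy, sub_zero] at hxy
    obtain ⟨hcont, hhom⟩ := hCp P hP
    have hp0 : 0 < p := by linarith
    have hzero : Φ P 0 = 0 :=
      eq_zero_of_forall_pos_map_smul_add_eq hp0 hcont hhom (v := 0) fun _ _ => by simp
    obtain ⟨v, hv0, hxv⟩ := exists_ne_zero_inner_eq_zero (by simpa using hn) x
    have hx : Φ P x = 0 := eq_zero_of_forall_pos_map_smul_add_eq hp0 hcont hhom fun ε hε =>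
      map_add_eq_of_mem_orthogonal_span (hcov P hP) hxy (smul_ne_zero hε.ne' hv0)
        (by rw [real_inner_smul_right, hxv, mul_zero])
    rw [hy, hx, hzero]
  · have h := map_add_eq_of_mem_orthogonal_span (hcov P hP) hxy hy
      (Submodule.inner_left_of_mem_orthogonal (V.orthogonalProjectionOnto x).2 hxy)
    rwa [add_sub_cancel] at h
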